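/- Let E be a real normed vector space, let A : E →L[ℝ] E be a continuous linear operator such that the series Σ_{i=0}^∞ ‖A^i‖ of operator norms of its powers converges with sum S, and let (z_n), (e_n) be sequences in E satisfying z_{n+1} = A z_n + e_{n+1} for all n ≥ 0, with ‖e_k‖ ≤ c for all k ≥ 1 and some c ≥ 0. Then the global prediction error is globally bounded: for every n ≥ 1, ‖z_n − A^n z_0‖ ≤ c · S. -/

import Mathlib

open Finset

/-- Discrete variation of constants (Duhamel's formula). -/
theorem ContinuousLinearMap.eq_pow_apply_add_sum_of_succ_eq {R M : Type*} [Semiring R]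
    [TopologicalSpace M] [AddCommMonoid M] [Module R M] (A : M →L[R] M) {z e : ℕ → M}
    (hrec : ∀ n, z (n + 1) = A (z n) + e (n + 1)) (n : ℕ) :
    z n = (A ^ n) (z 0) + ∑ i ∈ range n, (A ^ i) (e (n - i)) := by
  induction n with
  | zero => simp
  | succ n ih =>
    have hshift : ∀ i ∈ range n, (A ^ (i + 1)) (e (n + 1 - (i + 1))) = A ((A ^ i) (e (n - i))) :=
      fun i _ => by rw [pow_succ', Nat.add_sub_add_right, mul_apply_eq_comp]
    rw [sum_range_succ', sum_congr rfl hshift, ← map_sum, hrec, ih, map_add, pow_succ',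
      mul_apply_eq_comp, pow_zero, one_apply_eq_self, Nat.sub_zero, add_assoc]

theorem ContinuousLinearMap.norm_sum_range_apply_le_mul_of_hasSum {𝕜 E F : Type*}
    [NontriviallyNormedField 𝕜] [SeminormedAddCommGroup E] [NormedSpace 𝕜 E]
    [SeminormedAddCommGroup F] [NormedSpace 𝕜 F] {T : ℕ → E →L[𝕜] F} {S : ℝ}
    (hS : HasSum (fun i => ‖T i‖) S) {v : ℕ → E} {c : ℝ} (hc : 0 ≤ c) {n : ℕ}
    (hv : ∀ i < n, ‖v i‖ ≤ c) :
    ‖∑ i ∈ range n, T i (v i)‖ ≤ c * S :=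
  calc ‖∑ i ∈ range n, T i (v i)‖
      ≤ ∑ i ∈ range n, ‖T i‖ * c :=
        (norm_sum_le _ _).trans <| sum_le_sum fun i hi =>
          (T i).le_of_opNorm_le_of_le le_rfl (hv i (mem_range.mp hi))
    _ = c * ∑ i ∈ range n, ‖T i‖ := by rw [← sum_mul, mul_comm]
    _ ≤ c * S := mul_le_mul_of_nonneg_left (sum_le_hasSum _ (fun i _ => norm_nonneg _) hS) hc

/-- Theorem 1 of the paper: If the operator norms of the powers of `A`
are summable with sum `S` and the local errors are uniformly bounded by `c`, then the
global prediction error is globally bounded by `c * S`. -/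
theorem global_prediction_error_bound_of_stable
    {E : Type*} [NormedAddCommGroup E] [NormedSpace ℝ E]
    (A : E →L[ℝ] E) (S : ℝ) (hS : HasSum (fun i : ℕ => ‖A ^ i‖) S)
    (z e : ℕ → E)
    (hrec : ∀ n : ℕ, z (n + 1) = A (z n) + e (n + 1))
    (c : ℝ) (hc : 0 ≤ c) (he : ∀ k : ℕ, 1 ≤ k → ‖e k‖ ≤ c) :
    ∀ n : ℕ, 1 ≤ n → ‖z n - (A ^ n) (z 0)‖ ≤ c * S := by
  intro n _
  rw [A.eq_pow_apply_add_sum_of_succ_eq hrec n, add_sub_cancel_left]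
  exact ContinuousLinearMap.norm_sum_range_apply_le_mul_of_hasSum hS hc
    fun i hi => he (n - i) (by omega)
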